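/- The function f₂(u,v) = (8u + 2v + 3√5 + 7) / (−4u + 2v + 3√5 + 7) on D = {(u,v) : u ≥ 0, v ≥ 0, u+v ≤ 1} attains its maximum at (u,v) = (1,0), with maximum value √5. -/
import Mathlib

noncomputable def f₂ (u v : ℝ) : ℝ :=
  (8 * u + 2 * v + 3 * Real.sqrt 5 + 7) / (-4 * u + 2 * v + 3 * Real.sqrt 5 + 7)

theorem stmt_10 :
    (∀ u v : ℝ, 0 ≤ u → 0 ≤ v → u + v ≤ 1 → f₂ u v ≤ Real.sqrt 5) ∧
      f₂ 1 0 = Real.sqrt 5 := by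
  have hs : Real.sqrt 5 ^ 2 = 5 := Real.sq_sqrt (by norm_num)
  have hs2 : (2:ℝ) ≤ Real.sqrt 5 := by
    nlinarith [Real.sqrt_nonneg 5]
  constructor
  · intro u v hu hv huv
    have hd : 0 < -4 * u + 2 * v + 3 * Real.sqrt 5 + 7 := by nlinarith
    rw [f₂, div_le_iff₀ hd]
    nlinarith [mul_nonneg hv (sub_nonneg.2 hs2), mul_nonneg (Real.sqrt_nonneg 5) (sub_nonneg.2 huv)]
  · rw [f₂]
    rw [div_eq_iff (by nlinarith)]
    nlinarith
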